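/- arXiv:2104.06868 — 2 statements merged into one kernel-verified Lean document; each statement's English description precedes it below -/
import Mathlib

section
/- Let Ω be a set and let H be a linear subspace of the real-valued functions on Ω that contains all constant functions. Let Ê : H → ℝ be a sublinear expectation, i.e. (i) Ê(X) ≤ Ê(Y) whenever X ≤ Y pointwise, (ii) Ê(c) = c for every constant function c, (iii) Ê(X + Y) ≤ Ê(X) + Ê(Y), and (iv) Ê(λX) = λÊ(X) for every λ ≥ 0. Then for every X ∈ H, Ê(X) = sup { E(X) : E : H → ℝ linear and E(Y) ≤ Ê(Y) for all Y ∈ H }, and this supremum is attained: there exists a linear functional E₀ : H → ℝ with E₀ ≤ Ê on H and E₀(X) = Ê(X). -/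
/-!
Hahn–Banach. Given `X`, the functional `c • X ↦ c * E X` on the line through `X` is dominated
by `E` (for `c < 0` because `0 = E 0 ≤ E (c • X) + E ((-c) • X)`), so it extends to a linear
functional on the whole space that is still dominated by `E` and attains `E X` at `X`.
-/

section Sublinear

variable {V : Type*} [AddCommGroup V] [Module ℝ V] {N : V → ℝ}

theorem sublinear_map_zero (hom : ∀ (c : ℝ) (x : V), 0 ≤ c → N (c • x) = c * N x) :
    N 0 = 0 := by
  simpa using hom 0 0 le_rfl

theorem mul_le_sublinear_smul (hom : ∀ (c : ℝ) (x : V), 0 ≤ c → N (c • x) = c * N x)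
    (add : ∀ x y : V, N (x + y) ≤ N x + N y) (c : ℝ) (x : V) : c * N x ≤ N (c • x) := by
  rcases le_or_gt 0 c with hc | hc
  · exact (hom c x hc).ge
  · have hcancel : N 0 ≤ N (c • x) + N ((-c) • x) := by
      simpa [← add_smul] using add (c • x) ((-c) • x)
    rw [sublinear_map_zero hom, hom (-c) x (by linarith)] at hcancel
    linarith

theorem exists_linearMap_le_sublinear_eq (hom : ∀ (c : ℝ) (x : V), 0 ≤ c → N (c • x) = c * N x)
    (add : ∀ x y : V, N (x + y) ≤ N x + N y) (x : V) :
    ∃ L : V →ₗ[ℝ] ℝ, (∀ y, L y ≤ N y) ∧ L x = N x := by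
  have hwd : ∀ c : ℝ, c • x = 0 → c • N x = 0 := by
    intro c hcx
    rcases smul_eq_zero.mp hcx with rfl | rfl
    · exact zero_smul ℝ _
    · rw [sublinear_map_zero hom, smul_zero]
  let f : V →ₗ.[ℝ] ℝ := LinearPMap.mkSpanSingleton' x (N x) hwd
  have hf : ∀ y : f.domain, f y ≤ N y := by
    rintro ⟨y, hy⟩
    obtain ⟨c, rfl⟩ := Submodule.mem_span_singleton.mp hy
    rw [LinearPMap.mkSpanSingleton'_apply]
    exact mul_le_sublinear_smul hom add c x
  obtain ⟨L, hLf, hLN⟩ := exists_extension_of_le_sublinear f N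
    (fun c hc y => hom c y hc.le) add hf
  exact ⟨L, hLN, (hLf ⟨x, Submodule.mem_span_singleton_self x⟩).trans
    (LinearPMap.mkSpanSingleton'_apply_self x (N x) hwd _)⟩

end Sublinear

theorem sublinear_expectation_representation_general
    {Ω : Type*} (H : Submodule ℝ (Ω → ℝ))
    (E : H → ℝ)
    (hsub : ∀ X Y : H, E (X + Y) ≤ E X + E Y)
    (hpos : ∀ (l : ℝ) (X : H), 0 ≤ l → E (l • X) = l * E X) :
    ∀ X : H,
      IsGreatest {r : ℝ | ∃ L : H →ₗ[ℝ] ℝ, (∀ Y : H, L Y ≤ E Y) ∧ L X = r} (E X) := by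
  intro X
  refine ⟨exists_linearMap_le_sublinear_eq hpos hsub X, ?_⟩
  rintro _ ⟨L, hL, rfl⟩
  exact hL X

/-- Representation theorem for sublinear expectations: a sublinear expectation
`E` on a linear subspace `H` of real-valued functions on `Ω` containing the
constants is, at every `X ∈ H`, the (attained) supremum of the linear
functionals on `H` dominated by `E`. -/
theorem sublinear_expectation_representation
    {Ω : Type*} (H : Submodule ℝ (Ω → ℝ))
    (hconst : ∀ c : ℝ, (fun _ : Ω => c) ∈ H)
    (E : H → ℝ)
    (hmono : ∀ X Y : H, (X : Ω → ℝ) ≤ (Y : Ω → ℝ) → E X ≤ E Y)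
    (hconstE : ∀ c : ℝ, E ⟨fun _ : Ω => c, hconst c⟩ = c)
    (hsub : ∀ X Y : H, E (X + Y) ≤ E X + E Y)
    (hpos : ∀ (l : ℝ) (X : H), 0 ≤ l → E (l • X) = l * E X) :
    ∀ X : H,
      IsGreatest {r : ℝ | ∃ L : H →ₗ[ℝ] ℝ, (∀ Y : H, L Y ≤ E Y) ∧ L X = r} (E X) :=
  sublinear_expectation_representation_general H E hsub hpos
end

section
/- Let d ≥ 1 and let S_d denote the space of real symmetric d × d matrices. Let G : S_d → ℝ be subadditive (G(A + B) ≤ G(A) + G(B)), positively homogeneous (G(λA) = λG(A) for all λ ≥ 0), and monotone with respect to the Loewner order (if B − A is positive semidefinite then G(A) ≤ G(B)). Then there exists a nonempty, bounded, closed, convex set Γ of positive semidefinite symmetric d × d real matrices such that G(A) = (1/2) · sup_{γ ∈ Γ} tr(γ A) for every A ∈ S_d, and for each A the supremum is attained by some γ ∈ Γ. -/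
/-!
Take `Γ` to be the set of all symmetric `γ` with `½ tr(γ A) ≤ G A` for every symmetric `A`. It is
an intersection of closed half-spaces, hence closed and convex; testing against
`±(Eᵢⱼ + Eⱼᵢ)` bounds every entry; and monotonicity gives `½ tr(γ P) ≥ -G(-P) ≥ -G 0 = 0` for
`P ≥ 0`, so `Γ` consists of positive semidefinite matrices. The supremum is attained by
Hahn–Banach: `A ↦ G (A + Aᵀ)` is sublinear on all matrices and equals `2 G A` on symmetric `A`,
so for each symmetric `A₀` it dominates a linear functional that agrees with it at `A₀`, and every
linear functional on symmetric matrices is `A ↦ tr(γ A)` for a symmetric `γ`.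
-/

open Matrix

theorem exists_linearMap_le_eq_of_sublinear {E : Type*} [AddCommGroup E] [Module ℝ E]
    (N : E → ℝ) (N_hom : ∀ c : ℝ, 0 < c → ∀ x, N (c • x) = c * N x)
    (N_add : ∀ x y, N (x + y) ≤ N x + N y) (x : E) :
    ∃ g : E →ₗ[ℝ] ℝ, (∀ y, g y ≤ N y) ∧ g x = N x := by
  have N_zero : N 0 = 0 := by
    have := N_hom 2 two_pos 0
    rw [smul_zero] at this
    linarith
  have N_smul_ge (c : ℝ) : c * N x ≤ N (c • x) := by
    rcases le_or_gt 0 c with hc | hc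
    · rcases hc.eq_or_lt with rfl | hc
      · simp [N_zero]
      · exact (N_hom c hc x).ge
    · have := N_add (c • x) ((-c) • x)
      rw [← add_smul, add_neg_cancel, zero_smul, N_zero, N_hom _ (neg_pos.2 hc)] at this
      linarith
  let f : E →ₗ.[ℝ] ℝ := LinearPMap.mkSpanSingleton' x (N x) fun c hc => by
    rcases eq_or_ne c 0 with rfl | hc0
    · exact zero_smul _ _
    · rw [smul_eq_zero_iff_right hc0] at hc
      simp [hc, N_zero]
  obtain ⟨g, hgf, hgN⟩ := exists_extension_of_le_sublinear f N N_hom N_add <| by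
    rintro ⟨_, hy⟩
    obtain ⟨c, rfl⟩ := Submodule.mem_span_singleton.1 hy
    rw [LinearPMap.mkSpanSingleton'_apply]
    exact N_smul_ge c
  refine ⟨g, hgN, ?_⟩
  exact (hgf ⟨x, Submodule.mem_span_singleton_self x⟩).trans
    (LinearPMap.mkSpanSingleton'_apply_self _ _ _ _)

namespace Matrix

variable {n R : Type*}

theorem isSymm_single_add_single [DecidableEq n] [AddCommMonoid R] (i j : n) (a : R) :
    (single i j a + single j i a).IsSymm := by
  rw [IsSymm, transpose_add, transpose_single, transpose_single, add_comm]

variable [Fintype n]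

theorem trace_mul_vecMulVec [CommSemiring R] (γ : Matrix n n R) (x y : n → R) :
    (γ * vecMulVec x y).trace = y ⬝ᵥ (γ *ᵥ x) := by
  simp only [trace, diag_apply, mul_apply, vecMulVec_apply, dotProduct, mulVec, Finset.mul_sum]
  exact Finset.sum_congr rfl fun i _ => Finset.sum_congr rfl fun j _ => by ring

theorem trace_transpose_mul_of_isSymm [CommSemiring R] (γ : Matrix n n R) {A : Matrix n n R}
    (hA : A.IsSymm) : (γᵀ * A).trace = (γ * A).trace := by
  rw [← trace_transpose, transpose_mul, transpose_transpose, hA.eq, trace_mul_comm]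

theorem posSemidef_of_trace_mul_nonneg [CommRing R] [PartialOrder R] [StarRing R]
    [StarOrderedRing R] [TrivialStar R] {γ : Matrix n n R} (hγ : γ.IsSymm)
    (h : ∀ P : Matrix n n R, P.PosSemidef → 0 ≤ (γ * P).trace) : γ.PosSemidef := by
  refine .of_dotProduct_mulVec_nonneg (isHermitian_iff_isSymm.2 hγ) fun x => ?_
  simpa only [star_trivial, trace_mul_vecMulVec] using h _ (posSemidef_vecMulVec_self_star x)

variable [DecidableEq n]

theorem exists_trace_mul_eq_of_linearMap [CommSemiring R] (g : Matrix n n R →ₗ[R] R) :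
    ∃ γ : Matrix n n R, ∀ A, g A = (γ * A).trace := by
  refine ⟨of fun i j => g (single j i 1), fun A => ?_⟩
  conv_lhs => rw [matrix_eq_sum_single A]
  have hsingle (i j : n) : single i j (A i j) = A i j • single i j 1 := by
    rw [smul_single, smul_eq_mul, mul_one]
  simp only [map_sum, hsingle, map_smul, smul_eq_mul, trace, diag_apply, mul_apply, of_apply]
  rw [Finset.sum_comm]
  simp only [mul_comm]

theorem exists_isSymm_trace_mul_eq_of_linearMap {K : Type*} [Field K] [NeZero (2 : K)]
    (g : Matrix n n K →ₗ[K] K) :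
    ∃ γ : Matrix n n K, γ.IsSymm ∧ ∀ A, A.IsSymm → g A = (γ * A).trace := by
  obtain ⟨γ, hγ⟩ := exists_trace_mul_eq_of_linearMap g
  refine ⟨(2⁻¹ : K) • (γ + γᵀ), (isSymm_add_transpose_self γ).smul _, fun A hA => ?_⟩
  rw [smul_mul, add_mul, trace_smul, trace_add, trace_transpose_mul_of_isSymm γ hA, hγ,
    ← two_mul, smul_eq_mul, inv_mul_cancel_left₀ two_ne_zero]

end Matrix

namespace GFunction

variable {n : Type*} [Fintype n]

def representingSet (G : Matrix n n ℝ → ℝ) : Set (Matrix n n ℝ) :=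
  {γ | γ.IsSymm ∧ ∀ A : Matrix n n ℝ, A.IsSymm → 1 / 2 * (γ * A).trace ≤ G A}

variable (G : Matrix n n ℝ → ℝ)

theorem isClosed_representingSet : IsClosed (representingSet G) := by
  simp only [representingSet, Set.ofPred_and, Set.ofPred_forall]
  refine .inter (isClosed_eq (by fun_prop) continuous_id) ?_
  exact isClosed_iInter fun A => isClosed_iInter fun _ =>
    isClosed_le (by fun_prop) continuous_const

theorem convex_representingSet : Convex ℝ (representingSet G) := by
  rintro γ₁ ⟨hs₁, hle₁⟩ γ₂ ⟨hs₂, hle₂⟩ a b ha hb hab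
  refine ⟨(hs₁.smul a).add (hs₂.smul b), fun A hA => ?_⟩
  calc 1 / 2 * ((a • γ₁ + b • γ₂) * A).trace
      = a * (1 / 2 * (γ₁ * A).trace) + b * (1 / 2 * (γ₂ * A).trace) := by
        rw [add_mul, smul_mul, smul_mul, trace_add, trace_smul, trace_smul, smul_eq_mul,
          smul_eq_mul]
        ring
    _ ≤ a * G A + b * G A := by gcongr <;> [exact hle₁ A hA; exact hle₂ A hA]
    _ = G A := by rw [← add_mul, hab, one_mul]

theorem exists_abs_apply_le_of_mem_representingSet [DecidableEq n] :
    ∃ C, ∀ γ ∈ representingSet G, ∀ i j, |γ i j| ≤ C := by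
  let E (i j : n) : Matrix n n ℝ := single i j 1 + single j i 1
  obtain ⟨C, hC⟩ := Finite.exists_le fun p : n × n => max (G (E p.1 p.2)) (G (-E p.1 p.2))
  refine ⟨C, fun γ ⟨hγ, hle⟩ i j => ?_⟩
  have hE : 1 / 2 * (γ * E i j).trace = γ i j := by
    rw [mul_add, trace_add, trace_mul_single, trace_mul_single, hγ.apply i j]
    simp only [MulOpposite.op_one, one_smul]
    ring
  have hupper := hle _ (isSymm_single_add_single i j 1)
  have hlower := hle _ (isSymm_single_add_single i j 1).neg
  rw [mul_neg, trace_neg, mul_neg, hE] at hlower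
  rw [hE] at hupper
  refine abs_le.2 ⟨?_, ?_⟩ <;> linarith [le_max_left (G (E i j)) (G (-E i j)),
    le_max_right (G (E i j)) (G (-E i j)), hC (i, j)]

theorem posSemidef_of_mem_representingSet
    (hpos : ∀ (A : Matrix n n ℝ) (l : ℝ), A.IsSymm → 0 ≤ l → G (l • A) = l * G A)
    (hmono : ∀ A B : Matrix n n ℝ, A.IsSymm → B.IsSymm → (B - A).PosSemidef → G A ≤ G B)
    {γ : Matrix n n ℝ} (hγ : γ ∈ representingSet G) : γ.PosSemidef := by
  refine posSemidef_of_trace_mul_nonneg hγ.1 fun P hP => ?_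
  have hPs : P.IsSymm := isHermitian_iff_isSymm.1 hP.1
  have hG0 : G 0 = 0 := by simpa using hpos 0 0 isSymm_zero le_rfl
  have hle := hγ.2 (-P) hPs.neg
  have hmon : G (-P) ≤ G 0 := hmono _ _ hPs.neg isSymm_zero (by rwa [zero_sub, neg_neg])
  rw [mul_neg, trace_neg] at hle
  linarith

theorem exists_mem_representingSet_half_trace_mul_eq [DecidableEq n]
    (hsub : ∀ A B : Matrix n n ℝ, A.IsSymm → B.IsSymm → G (A + B) ≤ G A + G B)
    (hpos : ∀ (A : Matrix n n ℝ) (l : ℝ), A.IsSymm → 0 ≤ l → G (l • A) = l * G A)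
    {A₀ : Matrix n n ℝ} (hA₀ : A₀.IsSymm) :
    ∃ γ ∈ representingSet G, 1 / 2 * (γ * A₀).trace = G A₀ := by
  let N (A : Matrix n n ℝ) : ℝ := G (A + Aᵀ)
  have N_hom (c : ℝ) (hc : 0 < c) (A : Matrix n n ℝ) : N (c • A) = c * N A := by
    simp only [N, transpose_smul, ← smul_add]
    exact hpos _ _ (isSymm_add_transpose_self A) hc.le
  have N_add (A B : Matrix n n ℝ) : N (A + B) ≤ N A + N B := by
    simp only [N, transpose_add]
    rw [add_add_add_comm]
    exact hsub _ _ (isSymm_add_transpose_self A) (isSymm_add_transpose_self B)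
  have N_of_isSymm {A : Matrix n n ℝ} (hA : A.IsSymm) : N A = 2 * G A := by
    simp only [N, hA.eq, ← two_smul ℝ A]
    exact hpos A 2 hA zero_le_two
  obtain ⟨g, hgN, hgA₀⟩ := exists_linearMap_le_eq_of_sublinear N N_hom N_add A₀
  obtain ⟨γ, hγs, hγ⟩ := exists_isSymm_trace_mul_eq_of_linearMap g
  refine ⟨γ, ⟨hγs, fun A hA => ?_⟩, ?_⟩
  · linarith [hγ A hA, hgN A, N_of_isSymm hA]
  · linarith [hγ A₀ hA₀, N_of_isSymm hA₀]

end GFunction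

theorem G_function_representation_general
    (d : ℕ)
    (G : Matrix (Fin d) (Fin d) ℝ → ℝ)
    (hsub : ∀ A B : Matrix (Fin d) (Fin d) ℝ,
      A.IsSymm → B.IsSymm → G (A + B) ≤ G A + G B)
    (hpos : ∀ (A : Matrix (Fin d) (Fin d) ℝ) (l : ℝ),
      A.IsSymm → 0 ≤ l → G (l • A) = l * G A)
    (hmono : ∀ A B : Matrix (Fin d) (Fin d) ℝ,
      A.IsSymm → B.IsSymm → (B - A).PosSemidef → G A ≤ G B) :
    ∃ Γ : Set (Matrix (Fin d) (Fin d) ℝ),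
      Γ.Nonempty ∧
      (∃ C : ℝ, ∀ γ ∈ Γ, ∀ i j, |γ i j| ≤ C) ∧
      IsClosed Γ ∧
      Convex ℝ Γ ∧
      (∀ γ ∈ Γ, γ.IsSymm ∧ γ.PosSemidef) ∧
      (∀ A : Matrix (Fin d) (Fin d) ℝ, A.IsSymm →
        IsGreatest {r : ℝ | ∃ γ ∈ Γ, r = (1 / 2) * (γ * A).trace} (G A)) := by
  open GFunction in
  obtain ⟨γ₀, hγ₀, -⟩ := exists_mem_representingSet_half_trace_mul_eq G hsub hpos isSymm_zero
  refine ⟨representingSet G, ⟨γ₀, hγ₀⟩, exists_abs_apply_le_of_mem_representingSet G,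
    isClosed_representingSet G, convex_representingSet G,
    fun γ hγ => ⟨hγ.1, posSemidef_of_mem_representingSet G hpos hmono hγ⟩, fun A hA => ⟨?_, ?_⟩⟩
  · obtain ⟨γ, hγ, hγA⟩ := exists_mem_representingSet_half_trace_mul_eq G hsub hpos hA
    exact ⟨γ, hγ, hγA.symm⟩
  · rintro _ ⟨γ, hγ, rfl⟩
    exact hγ.2 A hA

/-- Representation of a monotone, subadditive, positively homogeneous function
`G` on the space of real symmetric `d × d` matrices (with the Loewner order) as
`G(A) = (1/2) · sup_{γ ∈ Γ} tr(γ A)` for a nonempty bounded closed convex set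
`Γ` of positive semidefinite symmetric matrices, the supremum being attained. -/
theorem G_function_representation
    (d : ℕ) (hd : 1 ≤ d)
    (G : Matrix (Fin d) (Fin d) ℝ → ℝ)
    (hsub : ∀ A B : Matrix (Fin d) (Fin d) ℝ,
      A.IsSymm → B.IsSymm → G (A + B) ≤ G A + G B)
    (hpos : ∀ (A : Matrix (Fin d) (Fin d) ℝ) (l : ℝ),
      A.IsSymm → 0 ≤ l → G (l • A) = l * G A)
    (hmono : ∀ A B : Matrix (Fin d) (Fin d) ℝ,
      A.IsSymm → B.IsSymm → (B - A).PosSemidef → G A ≤ G B) :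
    ∃ Γ : Set (Matrix (Fin d) (Fin d) ℝ),
      Γ.Nonempty ∧
      (∃ C : ℝ, ∀ γ ∈ Γ, ∀ i j, |γ i j| ≤ C) ∧
      IsClosed Γ ∧
      Convex ℝ Γ ∧
      (∀ γ ∈ Γ, γ.IsSymm ∧ γ.PosSemidef) ∧
      (∀ A : Matrix (Fin d) (Fin d) ℝ, A.IsSymm →
        IsGreatest {r : ℝ | ∃ γ ∈ Γ, r = (1 / 2) * (γ * A).trace} (G A)) :=
  G_function_representation_general d G hsub hpos hmono
end
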